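/- arXiv:2504.10940 — 5 statements merged into one kernel-verified Lean document; each statement's English description precedes it below -/
import Mathlib

section
/- Let Σ be a root system with invariant inner product (·,·), β the highest root, and δ a root with 2(β,δ)/(β,β) = 1 and (δ,δ) = (β,β). For a root γ and n ∈ ℤ write Σ_{γ,n} = {α ∈ Σ : 2(γ,α)/(γ,γ) = n}. Then Σ_{β,1} ∩ Σ_{δ,2} = {δ}. -/
open scoped RealInnerProductSpace

/-- Abstract data of a (reduced, crystallographic) root system in a real inner
product space, together with a choice of positive system. -/
structure RootSystemData (V : Type*) [NormedAddCommGroup V] [InnerProductSpace ℝ V] where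
  roots : Set V
  pos : Set V
  finite : roots.Finite
  ne_zero : ∀ α ∈ roots, α ≠ 0
  neg_mem : ∀ α ∈ roots, -α ∈ roots
  pos_subset : pos ⊆ roots
  pos_or_neg : ∀ α ∈ roots, (α ∈ pos ∧ -α ∉ pos) ∨ (α ∉ pos ∧ -α ∈ pos)
  reflect_mem : ∀ α ∈ roots, ∀ γ ∈ roots, γ - (2 * ⟪α, γ⟫ / ⟪α, α⟫) • α ∈ roots
  integral : ∀ α ∈ roots, ∀ γ ∈ roots, ∃ n : ℤ, 2 * ⟪α, γ⟫ / ⟪α, α⟫ = (n : ℝ)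
  reduced : ∀ α ∈ roots, ∀ t : ℝ, t • α ∈ roots → t = 1 ∨ t = -1
  pos_add : ∀ α ∈ pos, ∀ γ ∈ pos, α + γ ∈ roots → α + γ ∈ pos

variable {V : Type*} [NormedAddCommGroup V] [InnerProductSpace ℝ V]

/-- `Σ_{γ,n} = {α ∈ Σ : 2(γ,α)/(γ,γ) = n}`. -/
def RootSystemData.level (R : RootSystemData V) (γ : V) (n : ℤ) : Set V :=
  {α ∈ R.roots | 2 * ⟪γ, α⟫ / ⟪γ, γ⟫ = (n : ℝ)}

/-- `β` is the highest root: it is positive, of maximal length, and no `β + α`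
with `α` positive is again a root. -/
def RootSystemData.IsHighest (R : RootSystemData V) (β : V) : Prop :=
  β ∈ R.pos ∧ (∀ α ∈ R.roots, ⟪α, α⟫ ≤ ⟪β, β⟫) ∧ ∀ α ∈ R.pos, β + α ∉ R.roots

/-! A root `α` with `2(δ, α)/(δ, δ) = 2` satisfies `‖α - δ‖² = ‖α‖² - ‖δ‖²`, which is `≤ 0`
because `δ` is as long as the highest root, hence of maximal length; so `α = δ`. -/

theorem eq_of_inner_eq_inner_self_of_inner_self_le {α δ : V} (h : ⟪δ, α⟫ = ⟪δ, δ⟫)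
    (hle : ⟪α, α⟫ ≤ ⟪δ, δ⟫) : α = δ := by
  have hsq : ⟪α - δ, α - δ⟫ = ⟪α, α⟫ - ⟪δ, δ⟫ := by
    rw [inner_sub_sub_self, real_inner_comm δ α, h]
    ring
  exact sub_eq_zero.mp (real_inner_self_nonpos.mp (by linarith))

namespace RootSystemData

theorem self_mem_level_two (R : RootSystemData V) {γ : V} (hγ : γ ∈ R.roots) :
    γ ∈ R.level γ 2 := by
  have hγγ : ⟪γ, γ⟫ ≠ 0 := inner_self_ne_zero.mpr (R.ne_zero γ hγ)
  refine ⟨hγ, ?_⟩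
  rw [mul_div_assoc, div_self hγγ]
  norm_num

theorem inner_eq_inner_self_of_mem_level_two (R : RootSystemData V) {γ α : V} (hγ : γ ≠ 0)
    (hα : α ∈ R.level γ 2) : ⟪γ, α⟫ = ⟪γ, γ⟫ := by
  have hγγ : ⟪γ, γ⟫ ≠ 0 := inner_self_ne_zero.mpr hγ
  have h := hα.2
  push_cast at h
  field_simp at h
  linarith

theorem eq_of_mem_level_two_of_inner_self_le (R : RootSystemData V) {γ α : V} (hγ : γ ≠ 0)
    (hα : α ∈ R.level γ 2) (hle : ⟪α, α⟫ ≤ ⟪γ, γ⟫) : α = γ :=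
  eq_of_inner_eq_inner_self_of_inner_self_le (R.inner_eq_inner_self_of_mem_level_two hγ hα) hle

end RootSystemData

/-- `Σ_{β,1} ∩ Σ_{δ,2} = {δ}`. -/
theorem level_beta_one_inter_delta_two (R : RootSystemData V) (β δ : V)
    (hβ : R.IsHighest β) (hδ : δ ∈ R.roots)
    (hδ1 : 2 * ⟪β, δ⟫ / ⟪β, β⟫ = 1) (hδ2 : ⟪δ, δ⟫ = ⟪β, β⟫) :
    R.level β 1 ∩ R.level δ 2 = {δ} := by
  refine Set.Subset.antisymm ?_ (Set.singleton_subset_iff.mpr ?_)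
  · rintro α ⟨-, hα⟩
    exact R.eq_of_mem_level_two_of_inner_self_le (R.ne_zero δ hδ) hα
      (hδ2 ▸ hβ.2.1 α hα.1)
  · exact ⟨⟨hδ, by exact_mod_cast hδ1⟩, R.self_mem_level_two hδ⟩
end

section
/- Let Σ be a root system, β the highest root, and δ a root with 2(β,δ)/(β,β) = 1 and (δ,δ) = (β,β). Then Σ_{β,1} ∩ Σ_{δ,-1} = {β - δ}, where Σ_{γ,n} = {α ∈ Σ : 2(γ,α)/(γ,γ) = n}. -/
open scoped RealInnerProductSpace

variable {V : Type*} [NormedAddCommGroup V] [InnerProductSpace ℝ V]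

/-- `Σ_{β,1} ∩ Σ_{δ,-1} = {β - δ}`. -/
theorem level_beta_one_inter_delta_neg_one (R : RootSystemData V) (β δ : V)
    (hβ : R.IsHighest β) (hδ : δ ∈ R.roots)
    (hδ1 : 2 * ⟪β, δ⟫ / ⟪β, β⟫ = 1) (hδ2 : ⟪δ, δ⟫ = ⟪β, β⟫) :
    R.level β 1 ∩ R.level δ (-1) = {β - δ} := by
  obtain ⟨hβpos, hβmax, hβhigh⟩ := hβ
  have hβroot : β ∈ R.roots := R.pos_subset hβpos
  have hβne : β ≠ 0 := R.ne_zero β hβroot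
  have hb : ⟪β, β⟫ ≠ 0 := fun h => hβne (inner_self_eq_zero.mp h)
  have hbd : 2 * ⟪β, δ⟫ = ⟪β, β⟫ := by
    field_simp at hδ1; linarith
  have hdne : ⟪δ, δ⟫ ≠ 0 := hδ2 ▸ hb
  have hmem : β - δ ∈ R.roots := by
    have h := R.reflect_mem β hβroot δ hδ
    rw [hδ1, one_smul] at h
    have h2 := R.neg_mem _ h
    simpa [neg_sub] using h2
  ext α
  simp only [RootSystemData.level, Set.mem_inter_iff, Set.mem_setOf_eq,
    Set.mem_singleton_iff, Int.cast_one, Int.cast_neg]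
  constructor
  · rintro ⟨⟨hαroot, h1⟩, ⟨-, h2⟩⟩
    have h1' : 2 * ⟪β, α⟫ = ⟪β, β⟫ := by
      field_simp at h1; linarith
    have h2' : 2 * ⟪δ, α⟫ = -⟪β, β⟫ := by
      rw [hδ2] at h2
      field_simp at h2; linarith
    have hαle : ⟪α, α⟫ ≤ ⟪β, β⟫ := hβmax α hαroot
    have hzero : α - (β - δ) = 0 := by
      have hinner : ⟪α - (β - δ), α - (β - δ)⟫ = ⟪α, α⟫ - ⟪β, β⟫ := by
        simp only [inner_sub_left, inner_sub_right]
        linarith [real_inner_comm α β, real_inner_comm α δ, real_inner_comm δ β]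
      have hnn : (0:ℝ) ≤ ⟪α - (β - δ), α - (β - δ)⟫ := real_inner_self_nonneg
      have h0 : ⟪α - (β - δ), α - (β - δ)⟫ = 0 := by linarith
      exact inner_self_eq_zero.mp h0
    exact sub_eq_zero.mp hzero
  · rintro rfl
    refine ⟨⟨hmem, ?_⟩, ⟨hmem, ?_⟩⟩
    · simp only [inner_sub_right]
      rw [div_eq_one_iff_eq hb]
      linarith
    · simp only [inner_sub_right]
      rw [hδ2, div_eq_iff hb]
      linarith [real_inner_comm δ β]
end

section
/- Let Σ be a root system, β the highest root, and δ a root with 2(β,δ)/(β,β) = 1 and (δ,δ) = (β,β). Define Δ₊ = {δ - γ : γ ∈ Σ⁺ ∩ Σ_{β,0} ∩ Σ_{δ,1}} and Δ₋ = {δ + γ : γ ∈ Σ⁺ ∩ Σ_{β,0} ∩ Σ_{δ,-1}}. Then Σ_{β,1} ∩ Σ_{δ,1} = Δ₊ ⊔ Δ₋ (disjoint union). -/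
open scoped RealInnerProductSpace

variable {V : Type*} [NormedAddCommGroup V] [InnerProductSpace ℝ V]

/-- `Σ_{β,1} ∩ Σ_{δ,1} = Δ₊ ⊔ Δ₋` (disjoint union), where
`Δ₊ = {δ - γ : γ ∈ Σ⁺ ∩ Σ_{β,0} ∩ Σ_{δ,1}}` and
`Δ₋ = {δ + γ : γ ∈ Σ⁺ ∩ Σ_{β,0} ∩ Σ_{δ,-1}}`. -/
theorem level_beta_one_inter_delta_one (R : RootSystemData V) (β δ : V)
    (hβ : R.IsHighest β) (hδ : δ ∈ R.roots)
    (hδ1 : 2 * ⟪β, δ⟫ / ⟪β, β⟫ = 1) (hδ2 : ⟪δ, δ⟫ = ⟪β, β⟫) :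
    ∀ Δp Δm : Set V,
      Δp = (fun γ => δ - γ) '' (R.pos ∩ R.level β 0 ∩ R.level δ 1) →
      Δm = (fun γ => δ + γ) '' (R.pos ∩ R.level β 0 ∩ R.level δ (-1)) →
      R.level β 1 ∩ R.level δ 1 = Δp ∪ Δm ∧ Disjoint Δp Δm := by
  intro Δp Δm hΔp hΔm
  subst hΔp hΔm
  have hβr : β ∈ R.roots := R.pos_subset hβ.1
  have hb : ⟪β, β⟫ ≠ 0 := inner_self_ne_zero.mpr (R.ne_zero β hβr)
  have hd : ⟪δ, δ⟫ ≠ 0 := inner_self_ne_zero.mpr (R.ne_zero δ hδ)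
  have hdd : 2 * ⟪δ, δ⟫ / ⟪δ, δ⟫ = 2 := by field_simp
  constructor
  · ext α
    simp only [RootSystemData.level, Set.mem_inter_iff, Set.mem_setOf_eq, Set.mem_union,
      Set.mem_image, Int.cast_one, Int.cast_zero, Int.cast_neg]
    constructor
    · rintro ⟨⟨hαr, hαβ⟩, ⟨-, hαδ⟩⟩
      have hγr : δ - α ∈ R.roots := by
        have h := R.reflect_mem δ hδ α hαr
        rw [hαδ, one_smul] at h
        have := R.neg_mem _ h
        rwa [neg_sub] at this
      have hγβ : 2 * ⟪β, δ - α⟫ / ⟪β, β⟫ = 0 := by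
        rw [inner_sub_right, show 2 * (⟪β, δ⟫ - ⟪β, α⟫) / ⟪β, β⟫
          = 2 * ⟪β, δ⟫ / ⟪β, β⟫ - 2 * ⟪β, α⟫ / ⟪β, β⟫ by ring, hδ1, hαβ]
        ring
      have hγδ : 2 * ⟪δ, δ - α⟫ / ⟪δ, δ⟫ = 1 := by
        rw [inner_sub_right, show 2 * (⟪δ, δ⟫ - ⟪δ, α⟫) / ⟪δ, δ⟫
          = 2 * ⟪δ, δ⟫ / ⟪δ, δ⟫ - 2 * ⟪δ, α⟫ / ⟪δ, δ⟫ by ring, hdd, hαδ]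
        ring
      rcases R.pos_or_neg _ hγr with ⟨hp, -⟩ | ⟨-, hn⟩
      · exact Or.inl ⟨δ - α, ⟨⟨hp, hγr, hγβ⟩, hγr, hγδ⟩, by abel⟩
      · refine Or.inr ⟨-(δ - α), ⟨⟨hn, R.neg_mem _ hγr, ?_⟩, R.neg_mem _ hγr, ?_⟩, by abel⟩
        · rw [inner_neg_right, show 2 * -⟪β, δ - α⟫ / ⟪β, β⟫
            = -(2 * ⟪β, δ - α⟫ / ⟪β, β⟫) by ring, hγβ, neg_zero]
        · rw [inner_neg_right, show 2 * -⟪δ, δ - α⟫ / ⟪δ, δ⟫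
            = -(2 * ⟪δ, δ - α⟫ / ⟪δ, δ⟫) by ring, hγδ]
    · rintro (⟨γ, ⟨⟨hγp, hγr, hγβ⟩, -, hγδ⟩, rfl⟩ | ⟨γ, ⟨⟨hγp, hγr, hγβ⟩, -, hγδ⟩, rfl⟩)
      · have hαr : δ - γ ∈ R.roots := by
          have h := R.reflect_mem δ hδ γ hγr
          rw [hγδ, one_smul] at h
          have := R.neg_mem _ h
          rwa [neg_sub] at this
        refine ⟨⟨hαr, ?_⟩, hαr, ?_⟩
        · rw [inner_sub_right, show 2 * (⟪β, δ⟫ - ⟪β, γ⟫) / ⟪β, β⟫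
            = 2 * ⟪β, δ⟫ / ⟪β, β⟫ - 2 * ⟪β, γ⟫ / ⟪β, β⟫ by ring, hδ1, hγβ]
          ring
        · rw [inner_sub_right, show 2 * (⟪δ, δ⟫ - ⟪δ, γ⟫) / ⟪δ, δ⟫
            = 2 * ⟪δ, δ⟫ / ⟪δ, δ⟫ - 2 * ⟪δ, γ⟫ / ⟪δ, δ⟫ by ring, hdd, hγδ]
          ring
      · have hαr : δ + γ ∈ R.roots := by
          have h := R.reflect_mem δ hδ γ hγr
          rw [hγδ, neg_one_smul, sub_neg_eq_add] at h
          rwa [add_comm]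
        refine ⟨⟨hαr, ?_⟩, hαr, ?_⟩
        · rw [inner_add_right, show 2 * (⟪β, δ⟫ + ⟪β, γ⟫) / ⟪β, β⟫
            = 2 * ⟪β, δ⟫ / ⟪β, β⟫ + 2 * ⟪β, γ⟫ / ⟪β, β⟫ by ring, hδ1, hγβ]
          ring
        · rw [inner_add_right, show 2 * (⟪δ, δ⟫ + ⟪δ, γ⟫) / ⟪δ, δ⟫
            = 2 * ⟪δ, δ⟫ / ⟪δ, δ⟫ + 2 * ⟪δ, γ⟫ / ⟪δ, δ⟫ by ring, hdd, hγδ]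
          ring
  · rw [Set.disjoint_left]
    rintro a ⟨γ₁, ⟨⟨hγ₁p, -⟩, -⟩, rfl⟩ ⟨γ₂, ⟨⟨hγ₂p, -⟩, -⟩, heq⟩
    have h12 : γ₂ = -γ₁ := by
      have : δ + γ₂ = δ + -γ₁ := by simpa [sub_eq_add_neg] using heq
      exact add_left_cancel this
    rcases R.pos_or_neg γ₁ (R.pos_subset hγ₁p) with ⟨-, hn⟩ | ⟨hn, -⟩
    · exact hn (h12 ▸ hγ₂p)
    · exact hn hγ₁p
end

section
/- Let Σ be a root system, β the highest root, and δ a root with 2(β,δ)/(β,β) = 1 and (δ,δ) = (β,β). Then Σ_{β,1} ∩ Σ_{δ,0} = {β - γ : γ ∈ Σ_{β,1} ∩ Σ_{δ,1}}, where Σ_{γ,n} = {α ∈ Σ : 2(γ,α)/(γ,γ) = n}. -/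
open scoped RealInnerProductSpace

variable {V : Type*} [NormedAddCommGroup V] [InnerProductSpace ℝ V]

/-- `Σ_{β,1} ∩ Σ_{δ,0} = {β - γ : γ ∈ Σ_{β,1} ∩ Σ_{δ,1}}`. -/
theorem level_beta_one_inter_delta_zero (R : RootSystemData V) (β δ : V)
    (hβ : R.IsHighest β) (hδ : δ ∈ R.roots)
    (hδ1 : 2 * ⟪β, δ⟫ / ⟪β, β⟫ = 1) (hδ2 : ⟪δ, δ⟫ = ⟪β, β⟫) :
    R.level β 1 ∩ R.level δ 0 = (fun γ => β - γ) '' (R.level β 1 ∩ R.level δ 1) := by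
  have hβroot : β ∈ R.roots := R.pos_subset hβ.1
  have hββ : ⟪β, β⟫ ≠ 0 := fun h => R.ne_zero β hβroot (inner_self_eq_zero.1 h)
  have hc : (⟪δ, β⟫ : ℝ) = ⟪β, δ⟫ := real_inner_comm β δ
  have hβδ : 2 * ⟪β, δ⟫ = ⟪β, β⟫ := by
    field_simp at hδ1; linarith
  have key : ∀ α ∈ R.roots, 2 * ⟪β, α⟫ / ⟪β, β⟫ = 1 → β - α ∈ R.roots := by
    intro α hα h1
    have h := R.reflect_mem β hβroot α hα
    rw [h1, one_smul] at h
    have h2 := R.neg_mem _ h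
    simpa using h2
  ext x
  simp only [Set.mem_inter_iff, RootSystemData.level, Set.mem_setOf_eq, Set.mem_image,
    Int.cast_one, Int.cast_zero]
  constructor
  · rintro ⟨⟨hx, hx1⟩, -, hx2⟩
    have hβx : 2 * ⟪β, x⟫ = ⟪β, β⟫ := by field_simp at hx1; linarith
    have hδx : ⟪δ, x⟫ = 0 := by
      rw [hδ2] at hx2
      field_simp at hx2; linarith
    refine ⟨β - x, ⟨⟨key x hx hx1, ?_⟩, key x hx hx1, ?_⟩, by abel⟩
    · rw [inner_sub_right]; field_simp; linarith
    · rw [inner_sub_right, hδ2, hδx]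
      field_simp; linarith
  · rintro ⟨γ, ⟨⟨hγ, hγ1⟩, -, hγ2⟩, rfl⟩
    have hβγ : 2 * ⟪β, γ⟫ = ⟪β, β⟫ := by field_simp at hγ1; linarith
    have hδγ : 2 * ⟪δ, γ⟫ = ⟪β, β⟫ := by rw [hδ2] at hγ2; field_simp at hγ2; linarith
    refine ⟨⟨key γ hγ hγ1, ?_⟩, key γ hγ hγ1, ?_⟩
    · rw [inner_sub_right]; field_simp; linarith
    · rw [inner_sub_right, hδ2]
      field_simp
      linarith
end

section
/- With the V_i basis of g₂ ⊂ so(7), let h = ℝV₁(2,-1,-1) + ℝV₂(2,-1,-1) + ℝV₃(2,-1,-1) and Z = V₆(0,1,-1). Then {H ∈ h : [H, Z] = 0} = {0}. -/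
/-- The elementary skew-symmetric matrix `G_{ij} ∈ so(7)` with
`G_{ij}(e_i) = e_j`, `G_{ij}(e_j) = -e_i` (indices here are 0-based, so the
paper's `G₁₂` is `G 0 1`, etc.). -/
def G (i j : Fin 7) : Matrix (Fin 7) (Fin 7) ℝ :=
  Matrix.single j i 1 - Matrix.single i j 1

def V₁ (l m n : ℝ) : Matrix (Fin 7) (Fin 7) ℝ := l • G 1 2 + m • G 3 4 + n • G 5 6
def V₂ (l m n : ℝ) : Matrix (Fin 7) (Fin 7) ℝ := -(l • G 0 2) - m • G 3 5 + n • G 4 6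
def V₃ (l m n : ℝ) : Matrix (Fin 7) (Fin 7) ℝ := l • G 0 1 + m • G 3 6 + n • G 4 5
def V₄ (l m n : ℝ) : Matrix (Fin 7) (Fin 7) ℝ := -(l • G 0 4) + m • G 1 5 - n • G 2 6
def V₅ (l m n : ℝ) : Matrix (Fin 7) (Fin 7) ℝ := l • G 0 3 - m • G 1 6 - n • G 2 5
def V₆ (l m n : ℝ) : Matrix (Fin 7) (Fin 7) ℝ := -(l • G 0 6) - m • G 1 3 + n • G 2 4
def V₇ (l m n : ℝ) : Matrix (Fin 7) (Fin 7) ℝ := l • G 0 5 + m • G 1 4 + n • G 2 3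

/-! `ad Z` sends the three spanning vectors of `h` to `V₇(0,3,-3)`, `V₄(2,-1,-1)` and
`V₅(2,-1,-1)`. These are supported on disjoint sets of matrix entries, hence linearly
independent, so `ad Z` is injective on `h`. -/

theorem LinearIndependent.eq_zero_of_mem_span_of_lie_eq_zero {R L ι : Type*} [CommRing R]
    [LieRing L] [LieAlgebra R L] {v : ι → L} {z : L} (hv : LinearIndependent R fun i ↦ ⁅v i, z⁆)
    {x : L} (hx : x ∈ Submodule.span R (Set.range v)) (hxz : ⁅x, z⁆ = 0) : x = 0 := by
  obtain ⟨c, rfl⟩ := Finsupp.mem_span_range_iff_exists_finsupp.mp hx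
  simp only [Finsupp.sum, sum_lie, smul_lie] at hxz
  simp [linearIndependent_iff.mp hv c (by simpa [Finsupp.linearCombination_apply, Finsupp.sum])]

theorem lie_V₁_V₆ : ⁅V₁ 2 (-1) (-1), V₆ 0 1 (-1)⁆ = V₇ 0 3 (-3) := by
  ext i j
  fin_cases i <;> fin_cases j <;>
    simp [Ring.lie_def, V₁, V₆, V₇, G, Matrix.mul_apply, Matrix.single_apply] <;> norm_num

theorem lie_V₂_V₆ : ⁅V₂ 2 (-1) (-1), V₆ 0 1 (-1)⁆ = V₄ 2 (-1) (-1) := by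
  ext i j
  fin_cases i <;> fin_cases j <;>
    simp [Ring.lie_def, V₂, V₆, V₄, G, Matrix.mul_apply, Matrix.single_apply]

theorem lie_V₃_V₆ : ⁅V₃ 2 (-1) (-1), V₆ 0 1 (-1)⁆ = V₅ 2 (-1) (-1) := by
  ext i j
  fin_cases i <;> fin_cases j <;>
    simp [Ring.lie_def, V₃, V₆, V₅, G, Matrix.mul_apply, Matrix.single_apply]

theorem linearIndependent_V₇_V₄_V₅ :
    LinearIndependent ℝ ![V₇ 0 3 (-3), V₄ 2 (-1) (-1), V₅ 2 (-1) (-1)] := by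
  rw [Fintype.linearIndependent_iff]
  intro c hc
  have h14 := congrFun (congrFun hc 1) 4
  have h04 := congrFun (congrFun hc 0) 4
  have h03 := congrFun (congrFun hc 0) 3
  simp [Fin.sum_univ_three, V₄, V₅, V₇, G] at h14 h04 h03
  intro i
  fin_cases i <;> simpa

/-- for `h = ℝV₁(2,-1,-1) + ℝV₂(2,-1,-1) + ℝV₃(2,-1,-1)` and
`Z = V₆(0,1,-1)`, we have `{H ∈ h : [H, Z] = 0} = {0}`. -/
theorem centralizer_of_Z_in_h_trivial :
    ∀ H ∈ Submodule.span ℝ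
        ({V₁ 2 (-1) (-1), V₂ 2 (-1) (-1), V₃ 2 (-1) (-1)} :
          Set (Matrix (Fin 7) (Fin 7) ℝ)),
      ⁅H, V₆ 0 1 (-1)⁆ = 0 → H = 0 := by
  -- the commutator bracket on matrices is not a global `LieRing` instance
  let := LieRing.ofAssociativeRing (A := Matrix (Fin 7) (Fin 7) ℝ)
  intro H hH hHZ
  rw [← Set.singleton_union, ← Matrix.range_cons_cons_empty _ _ ![], ← Matrix.range_cons] at hH
  have hlie : (fun i ↦ ⁅![V₁ 2 (-1) (-1), V₂ 2 (-1) (-1), V₃ 2 (-1) (-1)] i, V₆ 0 1 (-1)⁆) =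
      ![V₇ 0 3 (-3), V₄ 2 (-1) (-1), V₅ 2 (-1) (-1)] := by
    ext1 i
    fin_cases i
    exacts [lie_V₁_V₆, lie_V₂_V₆, lie_V₃_V₆]
  refine LinearIndependent.eq_zero_of_mem_span_of_lie_eq_zero (R := ℝ) ?_ hH hHZ
  rw [hlie]
  exact linearIndependent_V₇_V₄_V₅
end
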